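/- Let ∞ ∈ Spec F denote the point given by the kernel of the natural surjection F → F_∞ (a maximal ideal, so ∞ is a closed point). For each B ≥ 1, the map Spec F_{≥B} → Spec F induced by the projection F → F_{≥B} is an open immersion whose image is an open subset of Spec F containing ∞, and these images for B ≥ 1 form a fundamental system of open neighborhoods of ∞: every open subset of Spec F containing ∞ contains the image of Spec F_{≥B} for some B ≥ 1. -/

import Mathlib

/-!
Projecting to the coordinates `i ≥ B` kills exactly the idempotent `e_B ∈ O` that is `1` in the
coordinates `i < B` and `0` elsewhere, so `F → F_{≥B}` is the quotient `F ⧸ (e_B)` and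
`Spec F_{≥B}` is the clopen set `D(1 - e_B)`, which contains `∞` because `e_B` vanishes at `∞`.

For the neighbourhood basis, take a basic open `D(f) ∋ ∞` and write `f = s / π^m` with
`s_∞ = u X^v ≠ 0`, `u` a unit. The coordinates of `s` approach `ψ_i(s_∞)` `π_i`-adically, so for
large `i` one can divide `s_i` by `π_i^v` and invert the quotient, coordinatewise; the result is
again an element of `O`. Hence `f` becomes a unit in `F_{≥B}` for `B` large, i.e.
`Spec F_{≥B} ⊆ D(f)`.
-/

open PowerSeries

set_option maxHeartbeats 1000000
set_option synthInstance.maxHeartbeats 400000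

noncomputable section

variable (k : Type) [Field k]
variable (O : ℕ → Type) [∀ i, CommRing (O i)]
variable (π : ∀ i, O i) (e : ℕ → ℕ)
variable (ψ : ∀ i, ((PowerSeries k) ⧸ (Ideal.span {(X : PowerSeries k) ^ e i})) ≃+*
    ((O i) ⧸ (Ideal.span {π i ^ e i})))
variable (hψ : ∀ i, ψ i (Ideal.Quotient.mk _ (X : PowerSeries k)) = Ideal.Quotient.mk _ (π i))

/-- The product ring `∏_{i ∈ ℕ} O_i × O_∞`, where `O_∞ = k[[π_∞]]`. -/
abbrev ProdRing : Type := ((i : ℕ) → O i) × PowerSeries k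

/-- The defining condition for membership in the subring `O`:
for every `n ≥ 1` there is `B ≥ n` such that for all `i ≥ B` the `i`-th coordinate is
congruent to (a lift of) `ψ_i` of the `∞`-coordinate modulo `π_i^n`. -/
def closeMem (x : ProdRing k O) : Prop :=
  ∀ n : ℕ, 1 ≤ n → ∃ B, n ≤ B ∧ ∀ i, B ≤ i → ∃ y : O i,
    Ideal.Quotient.mk (Ideal.span {π i ^ e i}) y
      = ψ i (Ideal.Quotient.mk (Ideal.span {(X : PowerSeries k) ^ e i}) x.2)
    ∧ x.1 i - y ∈ Ideal.span {π i ^ n}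

/-- The ring `O` of a family of close fields, as a subring of `∏_{i ∈ ℕ} O_i × O_∞`. -/
def closeSubring : Subring (ProdRing k O) where
  carrier := {x | closeMem k O π e ψ x}
  zero_mem' := by
    intro n hn
    refine ⟨n, le_rfl, fun i hi => ⟨0, by simp, by simp⟩⟩
  one_mem' := by
    intro n hn
    refine ⟨n, le_rfl, fun i hi => ⟨1, by simp, by simp⟩⟩
  add_mem' := by
    intro a b ha hb n hn
    obtain ⟨B1, hB1, h1⟩ := ha n hn
    obtain ⟨B2, hB2, h2⟩ := hb n hn
    refine ⟨max B1 B2, hB1.trans (le_max_left _ _), fun i hi => ?_⟩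
    obtain ⟨y1, hy1, hy1'⟩ := h1 i ((le_max_left _ _).trans hi)
    obtain ⟨y2, hy2, hy2'⟩ := h2 i ((le_max_right _ _).trans hi)
    refine ⟨y1 + y2, ?_, ?_⟩
    · have : (a + b).2 = a.2 + b.2 := rfl
      rw [this, map_add, map_add, map_add, hy1, hy2]
    · have : (a + b).1 i - (y1 + y2) = (a.1 i - y1) + (b.1 i - y2) := by
        show a.1 i + b.1 i - (y1 + y2) = _
        ring
      rw [this]
      exact Ideal.add_mem _ hy1' hy2'
  neg_mem' := by
    intro a ha n hn
    obtain ⟨B, hB, h⟩ := ha n hn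
    refine ⟨B, hB, fun i hi => ?_⟩
    obtain ⟨y, hy, hy'⟩ := h i hi
    refine ⟨-y, ?_, ?_⟩
    · have : (-a).2 = -a.2 := rfl
      rw [this, map_neg, map_neg, map_neg, hy]
    · have : (-a).1 i - (-y) = -(a.1 i - y) := by
        show -a.1 i - (-y) = _
        ring
      rw [this]
      exact neg_mem hy'
  mul_mem' := by
    intro a b ha hb n hn
    obtain ⟨B1, hB1, h1⟩ := ha n hn
    obtain ⟨B2, hB2, h2⟩ := hb n hn
    refine ⟨max B1 B2, hB1.trans (le_max_left _ _), fun i hi => ?_⟩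
    obtain ⟨y1, hy1, hy1'⟩ := h1 i ((le_max_left _ _).trans hi)
    obtain ⟨y2, hy2, hy2'⟩ := h2 i ((le_max_right _ _).trans hi)
    refine ⟨y1 * y2, ?_, ?_⟩
    · have : (a * b).2 = a.2 * b.2 := rfl
      rw [this, map_mul, map_mul, map_mul, hy1, hy2]
    · have : (a * b).1 i - (y1 * y2) = (a.1 i - y1) * b.1 i + y1 * (b.1 i - y2) := by
        show a.1 i * b.1 i - (y1 * y2) = _
        ring
      rw [this]
      exact Ideal.add_mem _ (Ideal.mul_mem_right _ _ hy1') (Ideal.mul_mem_left _ _ hy2')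

/-- The element `π = (π_1, π_2, …, π_∞)` of `O`. -/
def piO : closeSubring k O π e ψ :=
  ⟨(π, (X : PowerSeries k)), by
    intro n hn
    exact ⟨n, le_rfl, fun i hi => ⟨π i, (hψ i).symm, by simp⟩⟩⟩

/-- The ring `F = O[1/π]`. -/
abbrev Fring : Type := Localization.Away (piO k O π e ψ hψ)

/-- Coordinate projection `O → O_j` for `j ∈ ℕ`. -/
def projO (j : ℕ) : closeSubring k O π e ψ →+* O j :=
  (Pi.evalRingHom O j).comp ((RingHom.fst _ _).comp (closeSubring k O π e ψ).subtype)

/-- Coordinate projection `O → O_∞`. -/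
def projInf : closeSubring k O π e ψ →+* PowerSeries k :=
  (RingHom.snd _ _).comp (closeSubring k O π e ψ).subtype

/-- The product ring `∏_{i ≥ B} O_i × O_∞`. -/
abbrev ProdRingGe (B : ℕ) : Type := ((i : {i : ℕ // B ≤ i}) → O i.1) × PowerSeries k

/-- The projection `∏_{i ∈ ℕ} O_i × O_∞ → ∏_{i ≥ B} O_i × O_∞`. -/
def projGe (B : ℕ) : ProdRing k O →+* ProdRingGe k O B :=
  RingHom.prodMap (Pi.ringHom fun i => Pi.evalRingHom O i.1) (RingHom.id _)

/-- The composite `O → ∏_{i ≥ B} O_i × O_∞`. -/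
def toGe (B : ℕ) : closeSubring k O π e ψ →+* ProdRingGe k O B :=
  (projGe k O B).comp (closeSubring k O π e ψ).subtype

/-- `O_{≥ B}`, the image of `O` under the coordinate projection. -/
def OgeB (B : ℕ) : Subring (ProdRingGe k O B) := (toGe k O π e ψ B).range

/-- The projection `O → O_{≥ B}`. -/
def toOgeB (B : ℕ) : closeSubring k O π e ψ →+* OgeB k O π e ψ B :=
  (toGe k O π e ψ B).rangeRestrict

/-- The image of `π` in `O_{≥ B}`. -/
def piGe (B : ℕ) : OgeB k O π e ψ B := toOgeB k O π e ψ B (piO k O π e ψ hψ)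

/-- The ring `F_{≥ B} = O_{≥ B}[1/π]`. -/
abbrev FgeB (B : ℕ) : Type := Localization.Away (piGe k O π e ψ hψ B)

/-- The projection `F → F_{≥ B}`. -/
def projFge (B : ℕ) : Fring k O π e ψ hψ →+* FgeB k O π e ψ hψ B :=
  Localization.awayLift
    ((algebraMap (OgeB k O π e ψ B) (FgeB k O π e ψ hψ B)).comp (toOgeB k O π e ψ B))
    (piO k O π e ψ hψ)
    (IsLocalization.map_units (M := Submonoid.powers (piGe k O π e ψ hψ B)) _
      ⟨piGe k O π e ψ hψ B, Submonoid.mem_powers _⟩)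

variable [∀ i, IsDomain (O i)] (hπ : ∀ i, Irreducible (π i))

/-- The induced map `F → F_j` for `j ∈ ℕ`, where `F_j = Frac(O_j)`. -/
def locProj (j : ℕ) : Fring k O π e ψ hψ →+* FractionRing (O j) :=
  Localization.awayLift
    ((algebraMap (O j) (FractionRing (O j))).comp (projO k O π e ψ j))
    (piO k O π e ψ hψ)
    (IsLocalization.map_units (M := nonZeroDivisors (O j)) _
      ⟨π j, mem_nonZeroDivisors_of_ne_zero (hπ j).ne_zero⟩)

/-- The induced map `F → F_∞`, where `F_∞ = Frac(k[[π_∞]]) = k((π_∞))`. -/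
def locProjInf : Fring k O π e ψ hψ →+* FractionRing (PowerSeries k) :=
  Localization.awayLift
    ((algebraMap (PowerSeries k) (FractionRing (PowerSeries k))).comp (projInf k O π e ψ))
    (piO k O π e ψ hψ)
    (IsLocalization.map_units (M := nonZeroDivisors (PowerSeries k)) _
      ⟨(X : PowerSeries k), mem_nonZeroDivisors_of_ne_zero PowerSeries.X_ne_zero⟩)

/-- The point `∞ ∈ Spec F`, given by the kernel of `F → F_∞`. -/
def inftyPt : PrimeSpectrum (Fring k O π e ψ hψ) :=
  ⟨RingHom.ker (locProjInf k O π e ψ hψ), RingHom.ker_isPrime _⟩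

end

open Filter

section

variable {k : Type} [Field k] {O : ℕ → Type} [∀ i, CommRing (O i)] {π : ∀ i, O i} {e : ℕ → ℕ}
  {ψ : ∀ i, ((PowerSeries k) ⧸ (Ideal.span {(X : PowerSeries k) ^ e i})) ≃+*
    ((O i) ⧸ (Ideal.span {π i ^ e i}))}
  {hψ : ∀ i, ψ i (Ideal.Quotient.mk _ (X : PowerSeries k)) = Ideal.Quotient.mk _ (π i)}

theorem exists_snd_eq (f : PowerSeries k) :
    ∃ x : closeSubring k O π e ψ, (x : ProdRing k O).2 = f := by
  choose y hy using fun i => Ideal.Quotient.mk_surjective (ψ i (Ideal.Quotient.mk _ f))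
  exact ⟨⟨(y, f), fun n _ => ⟨n, le_rfl, fun i _ => ⟨y i, hy i, by simp⟩⟩⟩, rfl⟩

theorem mem_closeSubring_of_eventually_mem_span_pow {z : ∀ i, O i}
    (hz : ∀ n, ∀ᶠ i in atTop, z i ∈ Ideal.span {π i ^ n}) :
    ((z, 0) : ProdRing k O) ∈ closeSubring k O π e ψ := by
  intro n _
  obtain ⟨B, hB⟩ := eventually_atTop.1 (hz n)
  exact ⟨max n B, le_max_left _ _, fun i hi =>
    ⟨0, by simp, by simpa using hB i (le_of_max_le_right hi)⟩⟩

-- A lift of `ψ_i 0` is only known to lie in `(π_i ^ e_i)`, which is inside `(π_i ^ n)` once `n ≤ e_i`.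
theorem eventually_mem_span_pow_of_snd_eq_zero (he : ∀ i, i ≤ e i) {x : ProdRing k O}
    (hx : x ∈ closeSubring k O π e ψ) (hx0 : x.2 = 0) (n : ℕ) :
    ∀ᶠ i in atTop, x.1 i ∈ Ideal.span {π i ^ n} := by
  obtain ⟨B, hnB, hB⟩ := hx (n + 1) n.succ_pos
  filter_upwards [eventually_ge_atTop B] with i hi
  obtain ⟨y, hy, hxy⟩ := hB i hi
  rw [hx0, map_zero, map_zero, Ideal.Quotient.eq_zero_iff_mem] at hy
  rw [← sub_add_cancel (x.1 i) y]
  exact add_mem (Ideal.span_singleton_le_span_singleton.2 (pow_dvd_pow _ n.le_succ) hxy)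
    (Ideal.span_singleton_le_span_singleton.2
      (pow_dvd_pow _ (n.le_succ.trans (hnB.trans (hi.trans (he i))))) hy)

theorem eventually_toOgeB_eq {x y : closeSubring k O π e ψ}
    (hfst : ∀ᶠ i in atTop, (x : ProdRing k O).1 i = (y : ProdRing k O).1 i)
    (hsnd : (x : ProdRing k O).2 = (y : ProdRing k O).2) :
    ∀ᶠ B in atTop, toOgeB k O π e ψ B x = toOgeB k O π e ψ B y := by
  obtain ⟨N, hN⟩ := eventually_atTop.1 hfst
  filter_upwards [eventually_ge_atTop N] with B hB
  exact Subtype.ext (Prod.ext (funext fun i => hN i (hB.trans i.2)) hsnd)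

theorem exists_eventually_toOgeB_eq_piO_pow_mul (hπ : ∀ i, π i ≠ 0)
    [∀ i, IsDomain (O i)] (he : ∀ i, i ≤ e i) (x : closeSubring k O π e ψ) {v : ℕ}
    {g : PowerSeries k} (hx : (x : ProdRing k O).2 = X ^ v * g) :
    ∃ y : closeSubring k O π e ψ, (y : ProdRing k O).2 = g ∧ ∀ᶠ B in atTop,
      toOgeB k O π e ψ B x = toOgeB k O π e ψ B (piO k O π e ψ hψ ^ v * y) := by
  obtain ⟨c, hc⟩ := exists_snd_eq (O := O) (π := π) (ψ := ψ) g
  set z := x - piO k O π e ψ hψ ^ v * c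
  have hz := eventually_mem_span_pow_of_snd_eq_zero he z.2 (by simp [z, hx, hc, piO])
  obtain ⟨N, hN⟩ := eventually_atTop.1 (hz v)
  have hdiv : ∀ i, ∃ w : O i, N ≤ i → (z : ProdRing k O).1 i = π i ^ v * w := fun i => by
    by_cases hi : N ≤ i
    · obtain ⟨w, hw⟩ := Ideal.mem_span_singleton.1 (hN i hi)
      exact ⟨w, fun _ => hw⟩
    · exact ⟨0, fun h => absurd h hi⟩
  choose w hw using hdiv
  have hw_mem : ((w, 0) : ProdRing k O) ∈ closeSubring k O π e ψ :=
    mem_closeSubring_of_eventually_mem_span_pow fun n => by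
      filter_upwards [hz (n + v), eventually_ge_atTop N] with i hi hNi
      rw [Ideal.mem_span_singleton, hw i hNi, pow_add, mul_comm (π i ^ n)] at hi
      exact Ideal.mem_span_singleton.2
        ((mul_dvd_mul_iff_left (pow_ne_zero v (hπ i))).1 hi)
  refine ⟨c + ⟨_, hw_mem⟩, by simp [hc], eventually_toOgeB_eq ?_ ?_⟩
  · filter_upwards [eventually_ge_atTop N] with i hi
    have hzi : (x : ProdRing k O).1 i - π i ^ v * (c : ProdRing k O).1 i = π i ^ v * w i :=
      hw i hi
    show _ = π i ^ v * ((c : ProdRing k O).1 i + w i)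
    linear_combination hzi
  · simp [hx, hc, piO]

theorem exists_eventually_toOgeB_mul_eq_one (hπ : ∀ i, ¬IsUnit (π i))
    [∀ i, IsLocalRing (O i)] (he : ∀ i, i ≤ e i) (a : closeSubring k O π e ψ)
    (ha : (a : ProdRing k O).2 = 1) :
    ∃ b : closeSubring k O π e ψ, ∀ᶠ B in atTop, toOgeB k O π e ψ B (a * b) = 1 := by
  have hz := eventually_mem_span_pow_of_snd_eq_zero he (a - 1).2 (by simp [ha])
  have hunit : ∀ᶠ i in atTop, IsUnit ((a : ProdRing k O).1 i) := (hz 1).mono fun i hi => by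
    have hnonunit : 1 - (a : ProdRing k O).1 i ∈ nonunits (O i) := by
      rw [← neg_sub, ← IsLocalRing.mem_maximalIdeal]
      refine neg_mem ((Ideal.span_singleton_le_iff_mem _).2 ?_ (by simpa using hi))
      exact (IsLocalRing.mem_maximalIdeal _).2 (by simpa using hπ i)
    simpa using IsLocalRing.isUnit_one_sub_self_of_mem_nonunits _ hnonunit
  have hb_mem : ((fun i => Ring.inverse ((a : ProdRing k O).1 i) - 1, 0) : ProdRing k O)
      ∈ closeSubring k O π e ψ :=
    mem_closeSubring_of_eventually_mem_span_pow fun n => by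
      filter_upwards [hz n, hunit] with i hi hu
      have hsub : Ring.inverse ((a : ProdRing k O).1 i) - 1
          = -(Ring.inverse ((a : ProdRing k O).1 i) * ((a : ProdRing k O).1 i - 1)) := by
        rw [mul_sub, Ring.inverse_mul_cancel _ hu]; ring
      rw [hsub]
      exact neg_mem (Ideal.mul_mem_left _ _ (by simpa using hi))
  refine ⟨1 + ⟨_, hb_mem⟩, ?_⟩
  refine (eventually_toOgeB_eq (y := 1) ?_ (by simp [ha])).mono fun B hB => hB.trans (map_one _)
  filter_upwards [hunit] with i hu
  show (a : ProdRing k O).1 i * (1 + (Ring.inverse ((a : ProdRing k O).1 i) - 1)) = 1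
  rw [add_sub_cancel, Ring.mul_inverse_cancel _ hu]

theorem exists_eventually_toOgeB_mul_eq_piO_pow (hπ : ∀ i, Irreducible (π i))
    [∀ i, IsDomain (O i)] [∀ i, IsLocalRing (O i)] (he : ∀ i, i ≤ e i)
    (s : closeSubring k O π e ψ) (hs : (s : ProdRing k O).2 ≠ 0) :
    ∃ (t : closeSubring k O π e ψ) (v : ℕ), ∀ᶠ B in atTop,
      toOgeB k O π e ψ B (s * t) = toOgeB k O π e ψ B (piO k O π e ψ hψ ^ v) := by
  obtain ⟨v, u, hu⟩ := IsDiscreteValuationRing.eq_unit_mul_pow_irreducible hs X_irreducible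
  obtain ⟨y, hy, hsy⟩ := exists_eventually_toOgeB_eq_piO_pow_mul (hψ := hψ)
    (fun i => (hπ i).ne_zero) he s (by rw [hu, mul_comm])
  obtain ⟨c, hc⟩ := exists_snd_eq (O := O) (π := π) (ψ := ψ) (u⁻¹ : (PowerSeries k)ˣ)
  obtain ⟨b, hb⟩ := exists_eventually_toOgeB_mul_eq_one (fun i => (hπ i).not_isUnit) he (y * c)
    (by simp [hy, hc])
  refine ⟨c * b, v, ?_⟩
  filter_upwards [hsy, hb] with B hsyB hbB
  rw [map_mul, hsyB, ← map_mul, mul_assoc, ← mul_assoc y, map_mul _ (_ ^ v), hbB, mul_one]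

theorem locProjInf_algebraMap (x : closeSubring k O π e ψ) :
    locProjInf k O π e ψ hψ (algebraMap _ _ x)
      = algebraMap (PowerSeries k) (FractionRing (PowerSeries k)) (x : ProdRing k O).2 := by
  simp [locProjInf, projInf]

theorem locProjInf_surjective : Function.Surjective (locProjInf k O π e ψ hψ) := by
  refine (IsLocalization.lift_surjective_iff _).2 fun z => ?_
  obtain ⟨a, b, hb, rfl⟩ := IsFractionRing.div_surjective (A := PowerSeries k) z
  obtain ⟨n, u, rfl⟩ := IsDiscreteValuationRing.eq_unit_mul_pow_irreducible
    (nonZeroDivisors.ne_zero hb) X_irreducible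
  obtain ⟨c, hc⟩ := exists_snd_eq (O := O) (π := π) (ψ := ψ) (a * ↑u⁻¹)
  refine ⟨(c, ⟨piO k O π e ψ hψ ^ n, n, rfl⟩), ?_⟩
  have hb0 := IsFractionRing.to_map_ne_zero_of_mem_nonZeroDivisors
    (K := FractionRing (PowerSeries k)) hb
  rw [map_mul] at hb0
  show algebraMap _ _ a / algebraMap _ _ ((u : PowerSeries k) * X ^ n)
      * algebraMap _ _ ((X : PowerSeries k) ^ n)
    = algebraMap (PowerSeries k) (FractionRing (PowerSeries k)) (c : ProdRing k O).2
  rw [hc, map_mul, map_mul, map_units_inv]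
  field_simp [left_ne_zero_of_mul hb0, right_ne_zero_of_mul hb0]

variable (k O π e ψ) in
def idempotentBelow (B : ℕ) : closeSubring k O π e ψ :=
  ⟨(fun i => if i < B then 1 else 0, 0), mem_closeSubring_of_eventually_mem_span_pow fun _ => by
    filter_upwards [eventually_ge_atTop B] with i hi
    simp [not_lt.2 hi]⟩

theorem isIdempotentElem_idempotentBelow (B : ℕ) :
    IsIdempotentElem (idempotentBelow k O π e ψ B) := by
  refine Subtype.ext (Prod.ext (funext fun i => ?_) (mul_zero _))
  show ((if i < B then 1 else 0) * if i < B then 1 else 0 : O i) = if i < B then 1 else 0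
  split_ifs <;> simp

theorem ker_toOgeB (B : ℕ) :
    RingHom.ker (toOgeB k O π e ψ B) = Ideal.span {idempotentBelow k O π e ψ B} := by
  refine le_antisymm (fun x hx => ?_) ?_
  · have hx : toGe k O π e ψ B x = 0 := congrArg Subtype.val hx
    refine Ideal.mem_span_singleton'.2 ⟨x, Subtype.ext (Prod.ext (funext fun i => ?_) ?_)⟩
    · by_cases hi : i < B
      · simp [idempotentBelow, hi]
      · have hxi : (x : ProdRing k O).1 i = 0 := congrFun (congrArg Prod.fst hx) ⟨i, not_lt.1 hi⟩
        simp [idempotentBelow, hi, hxi]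
    · have hx2 : (x : ProdRing k O).2 = 0 := congrArg Prod.snd hx
      simp [idempotentBelow, hx2]
  · rw [Ideal.span_le, Set.singleton_subset_iff, SetLike.mem_coe, RingHom.mem_ker]
    exact Subtype.ext (Prod.ext (funext fun i => if_neg (not_lt.2 i.2)) rfl)

theorem projFge_algebraMap (B : ℕ) (x : closeSubring k O π e ψ) :
    projFge k O π e ψ hψ B (algebraMap _ _ x)
      = algebraMap (OgeB k O π e ψ B) (FgeB k O π e ψ hψ B) (toOgeB k O π e ψ B x) :=
  IsLocalization.Away.lift_eq (S := Fring k O π e ψ hψ)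
    (g := (algebraMap (OgeB k O π e ψ B) (FgeB k O π e ψ hψ B)).comp (toOgeB k O π e ψ B)) _
    (IsLocalization.map_units (M := Submonoid.powers (piGe k O π e ψ hψ B)) _
      ⟨piGe k O π e ψ hψ B, Submonoid.mem_powers _⟩) x

theorem ker_projFge (B : ℕ) :
    RingHom.ker (projFge k O π e ψ hψ B)
      = Ideal.span {algebraMap _ (Fring k O π e ψ hψ) (idempotentBelow k O π e ψ B)} := by
  calc RingHom.ker (projFge k O π e ψ hψ B)
      = (RingHom.ker (toOgeB k O π e ψ B)).map (algebraMap _ (Fring k O π e ψ hψ)) :=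
        IsLocalization.ker_map (T := Submonoid.powers (piGe k O π e ψ hψ B)) _ _
          (Submonoid.map_powers _ _)
    _ = _ := by rw [ker_toOgeB, Ideal.map_span, Set.image_singleton]

theorem projFge_surjective (B : ℕ) : Function.Surjective (projFge k O π e ψ hψ B) :=
  Localization.awayMap_surjective_iff.2 fun a =>
    let ⟨b, hb⟩ := (toGe k O π e ψ B).rangeRestrict_surjective a
    ⟨b, 0, by rw [pow_zero, one_mul]; exact hb⟩

theorem range_comap_projFge (B : ℕ) :
    Set.range (PrimeSpectrum.comap (projFge k O π e ψ hψ B))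
      = PrimeSpectrum.basicOpen
          (1 - algebraMap _ (Fring k O π e ψ hψ) (idempotentBelow k O π e ψ B)) := by
  rw [range_comap_of_surjective _ _ (projFge_surjective (hψ := hψ) B), ker_projFge,
    PrimeSpectrum.zeroLocus_span, PrimeSpectrum.zeroLocus_eq_basicOpen_of_isIdempotentElem _
      ((isIdempotentElem_idempotentBelow B).map _)]

theorem isOpenEmbedding_comap_projFge (B : ℕ) :
    Topology.IsOpenEmbedding (PrimeSpectrum.comap (projFge k O π e ψ hψ B)) :=
  ⟨(PrimeSpectrum.isClosedEmbedding_comap_of_surjective _ _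
      (projFge_surjective (hψ := hψ) B)).isEmbedding,
    range_comap_projFge (hψ := hψ) B ▸ (PrimeSpectrum.basicOpen _).isOpen⟩

theorem inftyPt_mem_range_comap_projFge (B : ℕ) :
    inftyPt k O π e ψ hψ ∈ Set.range (PrimeSpectrum.comap (projFge k O π e ψ hψ B)) := by
  rw [range_comap_projFge, SetLike.mem_coe, PrimeSpectrum.mem_basicOpen]
  show _ ∉ RingHom.ker (locProjInf k O π e ψ hψ)
  simp [RingHom.mem_ker, locProjInf_algebraMap, idempotentBelow]

theorem eventually_isUnit_projFge (hπ : ∀ i, Irreducible (π i))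
    [∀ i, IsDomain (O i)] [∀ i, IsLocalRing (O i)] (he : ∀ i, i ≤ e i)
    {f : Fring k O π e ψ hψ} (hf : locProjInf k O π e ψ hψ f ≠ 0) :
    ∀ᶠ B in atTop, IsUnit (projFge k O π e ψ hψ B f) := by
  obtain ⟨m, s, hs⟩ := IsLocalization.Away.surj (piO k O π e ψ hψ) f
  have hpi := IsLocalization.Away.algebraMap_isUnit (S := Fring k O π e ψ hψ) (piO k O π e ψ hψ)
  have hs0 : (s : ProdRing k O).2 ≠ 0 := by
    intro h0
    apply hf
    have h := congrArg (locProjInf k O π e ψ hψ) hs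
    rwa [locProjInf_algebraMap, h0, map_zero, map_mul, ((hpi.pow m).map _).mul_left_eq_zero] at h
  obtain ⟨t, v, ht⟩ := exists_eventually_toOgeB_mul_eq_piO_pow hπ he s hs0
  filter_upwards [ht] with B htB
  have : projFge k O π e ψ hψ B f
      * projFge k O π e ψ hψ B (algebraMap _ _ (piO k O π e ψ hψ) ^ m * algebraMap _ _ t)
      = algebraMap _ _ (piGe k O π e ψ hψ B) ^ v := by
    rw [← map_mul, ← mul_assoc, hs, ← map_mul, projFge_algebraMap, htB, map_pow, map_pow]
    rfl
  exact isUnit_of_mul_isUnit_left (this ▸ (IsLocalization.Away.algebraMap_isUnit _).pow v)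

theorem eventually_range_comap_projFge_subset (hπ : ∀ i, Irreducible (π i))
    [∀ i, IsDomain (O i)] [∀ i, IsLocalRing (O i)] (he : ∀ i, i ≤ e i)
    {U : Set (PrimeSpectrum (Fring k O π e ψ hψ))} (hU : IsOpen U)
    (hinfty : inftyPt k O π e ψ hψ ∈ U) :
    ∀ᶠ B in atTop, Set.range (PrimeSpectrum.comap (projFge k O π e ψ hψ B)) ⊆ U := by
  obtain ⟨_, ⟨f, rfl⟩, hf, hfU⟩ :=
    PrimeSpectrum.isTopologicalBasis_basic_opens.isOpen_iff.1 hU _ hinfty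
  filter_upwards [eventually_isUnit_projFge hπ he hf] with B hB
  rintro _ ⟨q, rfl⟩
  exact hfU fun hq => q.isPrime.ne_top (Ideal.eq_top_of_isUnit_mem _ hq hB)

end

theorem statement_6_general
    (k : Type) [Field k]
    (O : ℕ → Type) [∀ i, CommRing (O i)] [∀ i, IsDomain (O i)]
    [∀ i, IsDiscreteValuationRing (O i)]
    (π : ∀ i, O i) (hπ : ∀ i, Irreducible (π i))
    (e : ℕ → ℕ) (he : ∀ i, i ≤ e i)
    (ψ : ∀ i, ((PowerSeries k) ⧸ (Ideal.span {(X : PowerSeries k) ^ e i})) ≃+*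
      ((O i) ⧸ (Ideal.span {π i ^ e i})))
    (hψ : ∀ i, ψ i (Ideal.Quotient.mk _ (X : PowerSeries k)) = Ideal.Quotient.mk _ (π i)) :
    (RingHom.ker (locProjInf k O π e ψ hψ)).IsMaximal
    ∧ IsClosed ({inftyPt k O π e ψ hψ} : Set (PrimeSpectrum (Fring k O π e ψ hψ)))
    ∧ (∀ B, 1 ≤ B →
        Topology.IsOpenEmbedding (PrimeSpectrum.comap (projFge k O π e ψ hψ B))
        ∧ IsOpen (Set.range (PrimeSpectrum.comap (projFge k O π e ψ hψ B)))
        ∧ inftyPt k O π e ψ hψ ∈ Set.range (PrimeSpectrum.comap (projFge k O π e ψ hψ B)))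
    ∧ ∀ U : Set (PrimeSpectrum (Fring k O π e ψ hψ)), IsOpen U → inftyPt k O π e ψ hψ ∈ U →
        ∃ B, 1 ≤ B ∧ Set.range (PrimeSpectrum.comap (projFge k O π e ψ hψ B)) ⊆ U := by
  have hmax : (RingHom.ker (locProjInf k O π e ψ hψ)).IsMaximal :=
    RingHom.ker_isMaximal_of_surjective _ locProjInf_surjective
  refine ⟨hmax, (PrimeSpectrum.isClosed_singleton_iff_isMaximal _).2 hmax,
    fun B _ => ⟨isOpenEmbedding_comap_projFge B, (isOpenEmbedding_comap_projFge B).isOpen_range,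
      inftyPt_mem_range_comap_projFge B⟩, fun U hU hinfty =>
    ((eventually_ge_atTop 1).and (eventually_range_comap_projFge_subset hπ he hU hinfty)).exists⟩

theorem statement_6
    (p : ℕ) (hp : p.Prime)
    (k : Type) [Field k] [CharP k p] [ExpChar k p] [PerfectRing k p]
    (O : ℕ → Type) [∀ i, CommRing (O i)] [∀ i, IsDomain (O i)]
    [∀ i, IsDiscreteValuationRing (O i)] [∀ i, CharZero (O i)]
    (π : ∀ i, O i) (hπ : ∀ i, Irreducible (π i))
    [∀ i, IsAdicComplete (Ideal.span {π i}) (O i)]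
    (ρ : ∀ i, ((O i) ⧸ (Ideal.span {π i})) ≃+* k)
    (e : ℕ → ℕ) (he : ∀ i, i ≤ e i)
    (hpe : ∀ i, Ideal.span {((p : O i))} = Ideal.span {π i ^ e i})
    (ψ : ∀ i, ((PowerSeries k) ⧸ (Ideal.span {(X : PowerSeries k) ^ e i})) ≃+*
      ((O i) ⧸ (Ideal.span {π i ^ e i})))
    (hψ : ∀ i, ψ i (Ideal.Quotient.mk _ (X : PowerSeries k)) = Ideal.Quotient.mk _ (π i)) :
    (RingHom.ker (locProjInf k O π e ψ hψ)).IsMaximal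
    ∧ IsClosed ({inftyPt k O π e ψ hψ} : Set (PrimeSpectrum (Fring k O π e ψ hψ)))
    ∧ (∀ B, 1 ≤ B →
        Topology.IsOpenEmbedding (PrimeSpectrum.comap (projFge k O π e ψ hψ B))
        ∧ IsOpen (Set.range (PrimeSpectrum.comap (projFge k O π e ψ hψ B)))
        ∧ inftyPt k O π e ψ hψ ∈ Set.range (PrimeSpectrum.comap (projFge k O π e ψ hψ B)))
    ∧ ∀ U : Set (PrimeSpectrum (Fring k O π e ψ hψ)), IsOpen U → inftyPt k O π e ψ hψ ∈ U →
        ∃ B, 1 ≤ B ∧ Set.range (PrimeSpectrum.comap (projFge k O π e ψ hψ B)) ⊆ U :=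
  statement_6_general k O π hπ e he ψ hψ
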